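/- Let d ∈ ℕ, c ≥ 0, ε > 0 and m ∈ ℕ₀. Define ψ^u_{c,0}(x) := |x|^{-c/2-d/2-ε/2} for |x| > e_0 = 0, and for m ≥ 1 define ψ^u_{c,m}(x) := |x|^{-c/2-d/2} ∏_{j=1}^m (ln_j(|x|))^{-1/2} · (ln_m(|x|))^{-ε/2} for |x| > e_m. Define W^{c,0}(x) := (d(4-d)+c²+4c+ε(2c+4+ε))/(4|x|²), and for m ≥ 1 define W^{c,m}(x) := (d(4-d)+c²+4c)/(4|x|²) + ((c+2)/(2|x|²)) Σ_{k=1}^m ∏_{j=1}^k (ln_j(|x|))^{-1} + ((cε+2ε)/(2|x|²)) ∏_{j=1}^m (ln_j(|x|))^{-1} + (1/(4|x|²)) ( Σ_{k=1}^m ∏_{j=1}^k (ln_j(|x|))^{-1} + ε ∏_{j=1}^m (ln_j(|x|))^{-1} )² + (1/(2|x|²)) Σ_{i=1}^m Σ_{j=1}^i ∏_{k=1}^i (ln_k(|x|))^{-1} ∏_{l=1}^j (ln_l(|x|))^{-1} + (ε/(2|x|²)) ∏_{l=1}^m (ln_l(|x|))^{-1} · Σ_{i=1}^m ∏_{k=1}^i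 (ln_k(|x|))^{-1}. Then ψ^u_{c,m} is smooth on {x : |x| > e_m} and satisfies (-Δ + W^{c,m}) ψ^u_{c,m}(x) = 0 pointwise for all |x| > e_m. -/

import Mathlib

/-!
On `{|x| > e_m}` write `ψᵘ_{c,m}(x) = exp (h |x|)` with
`h(r) = a ln r - ½ ∑_{j=1}^m ln_{j+1} r - (ε/2) ln_{m+1} r` and `a = -c/2 - d/2`. For a radial
function `Δ g(|x|) = g'' + (d - 1) g' / r`, so `Δψ / ψ = h'' + h'² + (d - 1) h' / r`. With
`P_k = ∏_{j=1}^k (ln_j)⁻¹` one has `(ln_{k+1})' = P_k / r` and `P_k' = -(P_k / r) ∑_{j=1}^k P_j`,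
so this Riccati expression is a polynomial in `1/r`, `P_m`, `∑_k P_k` and `∑_{j ≤ k} P_k P_j`,
and expanding it gives exactly `W^{c,m}`.
-/
open MeasureTheory Real Filter Finset
open scoped RealInnerProductSpace ENNReal Topology

/-- Iterated exponential: `iterExp 0 = 0`, `iterExp (n+1) = exp (iterExp n)`
(the `e_n` of the paper). -/
noncomputable def iterExp : ℕ → ℝ
  | 0 => 0
  | n + 1 => Real.exp (iterExp n)

/-- Iterated logarithm: `iterLog 1 r = log r`, `iterLog (n+1) r = log (iterLog n r)`
(the `ln_n` of the paper). -/
noncomputable def iterLog : ℕ → ℝ → ℝ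
  | 0, r => r
  | n + 1, r => Real.log (iterLog n r)

/-- The Euclidean Laplacian `Δ f x = ∑ i, ∂²f/∂x_i² (x)`. -/
noncomputable def lap {d : ℕ} (f : EuclideanSpace ℝ (Fin d) → ℝ)
    (x : EuclideanSpace ℝ (Fin d)) : ℝ :=
  ∑ i : Fin d, fderiv ℝ (fun y => fderiv ℝ f y (EuclideanSpace.single i 1)) x
    (EuclideanSpace.single i 1)

/-- `ψᵘ_{c,m}` : for `m = 0` it is `|x|^{-c/2-d/2-ε/2}`, and for `m ≥ 1` it is
`|x|^{-c/2-d/2} ∏_{j=1}^m (ln_j |x|)^{-1/2} · (ln_m |x|)^{-ε/2}`. -/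
noncomputable def psiU (d : ℕ) (c ε : ℝ) (m : ℕ) (x : EuclideanSpace ℝ (Fin d)) : ℝ :=
  if m = 0 then ‖x‖ ^ (-(c / 2) - (d : ℝ) / 2 - ε / 2)
  else ‖x‖ ^ (-(c / 2) - (d : ℝ) / 2) * (∏ j ∈ Finset.Icc 1 m, (iterLog j ‖x‖) ^ (-(1 : ℝ) / 2))
        * (iterLog m ‖x‖) ^ (-(ε / 2))

/-- The potential `W^{c,m}` with parameter `ε` (as a function of `r = |x|`). -/
noncomputable def Wu (d : ℕ) (c ε : ℝ) (m : ℕ) (r : ℝ) : ℝ :=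
  if m = 0 then ((d : ℝ) * (4 - (d : ℝ)) + c ^ 2 + 4 * c + ε * (2 * c + 4 + ε)) / (4 * r ^ 2)
  else ((d : ℝ) * (4 - (d : ℝ)) + c ^ 2 + 4 * c) / (4 * r ^ 2)
    + ((c + 2) / (2 * r ^ 2)) * ∑ k ∈ Finset.Icc 1 m, ∏ j ∈ Finset.Icc 1 k, (iterLog j r)⁻¹
    + ((c * ε + 2 * ε) / (2 * r ^ 2)) * ∏ j ∈ Finset.Icc 1 m, (iterLog j r)⁻¹
    + (1 / (4 * r ^ 2)) * (∑ k ∈ Finset.Icc 1 m, ∏ j ∈ Finset.Icc 1 k, (iterLog j r)⁻¹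
        + ε * ∏ j ∈ Finset.Icc 1 m, (iterLog j r)⁻¹) ^ 2
    + (1 / (2 * r ^ 2)) * ∑ i ∈ Finset.Icc 1 m, ∑ j ∈ Finset.Icc 1 i,
        (∏ k ∈ Finset.Icc 1 i, (iterLog k r)⁻¹) * ∏ l ∈ Finset.Icc 1 j, (iterLog l r)⁻¹
    + (ε / (2 * r ^ 2)) * (∏ l ∈ Finset.Icc 1 m, (iterLog l r)⁻¹)
        * ∑ i ∈ Finset.Icc 1 m, ∏ k ∈ Finset.Icc 1 i, (iterLog k r)⁻¹

lemma iterExp_nonneg (n : ℕ) : 0 ≤ iterExp n := by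
  cases n with
  | zero => exact le_rfl
  | succ n => exact (exp_pos _).le

lemma iterExp_lt_iterLog {n j : ℕ} {r : ℝ} (hr : iterExp (n + j) < r) :
    iterExp n < iterLog j r := by
  induction j generalizing n with
  | zero => exact hr
  | succ j ih =>
    have hlt : exp (iterExp n) < iterLog j r := ih (n := n + 1) (by convert hr using 2; omega)
    exact (lt_log_iff_exp_lt ((exp_pos _).trans hlt)).2 hlt

lemma iterLog_pos {m j : ℕ} {r : ℝ} (hj : j ≤ m) (hr : iterExp m < r) : 0 < iterLog j r :=
  (iterExp_nonneg _).trans_lt (iterExp_lt_iterLog (by rwa [Nat.sub_add_cancel hj]))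

noncomputable def invLogProd (k : ℕ) (r : ℝ) : ℝ := ∏ j ∈ Icc 1 k, (iterLog j r)⁻¹

lemma invLogProd_zero (r : ℝ) : invLogProd 0 r = 1 := rfl

lemma invLogProd_succ (k : ℕ) (r : ℝ) :
    invLogProd (k + 1) r = invLogProd k r * (iterLog (k + 1) r)⁻¹ :=
  prod_Icc_succ_top (Nat.le_add_left 1 k) _

lemma contDiffAt_iterLog {n : WithTop ℕ∞} {k : ℕ} {r : ℝ} (hr : ∀ j < k, iterLog j r ≠ 0) :
    ContDiffAt ℝ n (iterLog k) r := by
  induction k with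
  | zero => exact contDiffAt_id
  | succ k ih =>
    exact (contDiffAt_log.2 (hr k k.lt_succ_self)).comp r
      (ih fun j hj => hr j (hj.trans k.lt_succ_self))

lemma hasDerivAt_iterLog_succ {k : ℕ} {r : ℝ} (hr : ∀ j ≤ k, iterLog j r ≠ 0) :
    HasDerivAt (iterLog (k + 1)) (invLogProd k r / r) r := by
  induction k with
  | zero => simpa [invLogProd_zero, iterLog] using hasDerivAt_log (hr 0 le_rfl)
  | succ k ih =>
    have hk := (hasDerivAt_log (hr (k + 1) le_rfl)).comp r
      (ih fun j hj => hr j (hj.trans k.le_succ))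
    exact hk.congr_deriv (by rw [invLogProd_succ]; ring)

lemma hasDerivAt_invLogProd {k : ℕ} {r : ℝ} (hr : ∀ j ≤ k, iterLog j r ≠ 0) :
    HasDerivAt (invLogProd k) (-(invLogProd k r / r) * ∑ j ∈ Icc 1 k, invLogProd j r) r := by
  induction k with
  | zero =>
    rw [show invLogProd 0 = fun _ => 1 from funext invLogProd_zero]
    simpa using hasDerivAt_const r (1 : ℝ)
  | succ k ih =>
    have hr' : ∀ j ≤ k, iterLog j r ≠ 0 := fun j hj => hr j (hj.trans k.le_succ)
    have hk := (ih hr').fun_mul ((hasDerivAt_iterLog_succ hr').fun_inv (hr (k + 1) le_rfl))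
    have hfun : (fun s => invLogProd k s * (iterLog (k + 1) s)⁻¹) = invLogProd (k + 1) := by
      funext s; rw [invLogProd_succ]
    rw [hfun] at hk
    refine hk.congr_deriv ?_
    rw [sum_Icc_succ_top (Nat.le_add_left 1 k), invLogProd_succ]
    field_simp [hr (k + 1) le_rfl]
    ring

/-- `log ψᵘ_{c,m}(x)` as a function of `r = |x|` when `a = -c/2 - d/2`, including `m = 0`. -/
noncomputable def logPsiU (a ε : ℝ) (m : ℕ) (r : ℝ) : ℝ :=
  a * log r - 1 / 2 * ∑ j ∈ Icc 1 m, iterLog (j + 1) r - ε / 2 * iterLog (m + 1) r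

noncomputable def logPsiUDeriv (a ε : ℝ) (m : ℕ) (r : ℝ) : ℝ :=
  (a - 1 / 2 * ∑ k ∈ Icc 1 m, invLogProd k r - ε / 2 * invLogProd m r) / r

noncomputable def logPsiUDeriv2 (a ε : ℝ) (m : ℕ) (r : ℝ) : ℝ :=
  (-a + 1 / 2 * (∑ k ∈ Icc 1 m, invLogProd k r
      + ∑ k ∈ Icc 1 m, ∑ j ∈ Icc 1 k, invLogProd k r * invLogProd j r)
    + ε / 2 * invLogProd m r * (1 + ∑ k ∈ Icc 1 m, invLogProd k r)) / r ^ 2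

section LogPsiU

variable {a ε : ℝ} {m : ℕ} {r : ℝ}

lemma contDiffAt_logPsiU {n : WithTop ℕ∞} (hr : ∀ j ≤ m, iterLog j r ≠ 0) :
    ContDiffAt ℝ n (logPsiU a ε m) r := by
  have hlog : ∀ k ≤ m, ContDiffAt ℝ n (iterLog (k + 1)) r := fun k hk =>
    contDiffAt_iterLog fun j hj => hr j (by omega)
  refine ((contDiffAt_const.mul (contDiffAt_log.2 (hr 0 m.zero_le))).sub
    (contDiffAt_const.mul (ContDiffAt.sum fun k hk => ?_))).sub
    (contDiffAt_const.mul (hlog m le_rfl))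
  exact hlog k (mem_Icc.1 hk).2

lemma hasDerivAt_logPsiU (hr : ∀ j ≤ m, iterLog j r ≠ 0) :
    HasDerivAt (logPsiU a ε m) (logPsiUDeriv a ε m r) r := by
  have hlog : ∀ k ≤ m, HasDerivAt (iterLog (k + 1)) (invLogProd k r / r) r := fun k hk =>
    hasDerivAt_iterLog_succ fun j hj => hr j (hj.trans hk)
  have hsum := HasDerivAt.fun_sum fun k (hk : k ∈ Icc 1 m) => hlog k (mem_Icc.1 hk).2
  have hr0 : r ≠ 0 := hr 0 m.zero_le
  refine ((((hasDerivAt_log hr0).const_mul a).sub (hsum.const_mul _)).sub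
    ((hlog m le_rfl).const_mul _)).congr_deriv ?_
  rw [logPsiUDeriv, ← sum_div]
  ring

lemma hasDerivAt_logPsiUDeriv (hr : ∀ j ≤ m, iterLog j r ≠ 0) :
    HasDerivAt (logPsiUDeriv a ε m) (logPsiUDeriv2 a ε m r) r := by
  have hr0 : r ≠ 0 := hr 0 m.zero_le
  have hprod : ∀ k ≤ m, HasDerivAt (invLogProd k)
      (-(invLogProd k r / r) * ∑ j ∈ Icc 1 k, invLogProd j r) r := fun k hk =>
    hasDerivAt_invLogProd fun j hj => hr j (hj.trans hk)
  have hsum := HasDerivAt.fun_sum fun k (hk : k ∈ Icc 1 m) => hprod k (mem_Icc.1 hk).2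
  refine ((((hasDerivAt_const r a).sub (hsum.const_mul _)).sub
    ((hprod m le_rfl).const_mul _)).div (hasDerivAt_id r) hr0).congr_deriv ?_
  have hdouble : ∑ k ∈ Icc 1 m, -(invLogProd k r / r) * ∑ j ∈ Icc 1 k, invLogProd j r
      = -(∑ k ∈ Icc 1 m, ∑ j ∈ Icc 1 k, invLogProd k r * invLogProd j r) / r := by
    simp only [neg_mul, sum_neg_distrib, div_mul_eq_mul_div, ← sum_div, mul_sum, neg_div]
  rw [hdouble, logPsiUDeriv2]
  simp only [id, Pi.sub_apply]
  field_simp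
  ring

end LogPsiU

lemma Wu_eq_invLogProd (d : ℕ) (c ε : ℝ) (m : ℕ) (r : ℝ) :
    Wu d c ε m r = ((d : ℝ) * (4 - d) + c ^ 2 + 4 * c) / (4 * r ^ 2)
      + (c + 2) / (2 * r ^ 2) * ∑ k ∈ Icc 1 m, invLogProd k r
      + (c * ε + 2 * ε) / (2 * r ^ 2) * invLogProd m r
      + 1 / (4 * r ^ 2) * (∑ k ∈ Icc 1 m, invLogProd k r + ε * invLogProd m r) ^ 2
      + 1 / (2 * r ^ 2) * ∑ i ∈ Icc 1 m, ∑ j ∈ Icc 1 i, invLogProd i r * invLogProd j r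
      + ε / (2 * r ^ 2) * invLogProd m r * ∑ i ∈ Icc 1 m, invLogProd i r := by
  rcases m with _ | m
  · simp only [Wu, ↓reduceIte, invLogProd_zero, Icc_eq_empty_of_lt zero_lt_one, sum_empty]
    ring
  · rfl

lemma logPsiU_riccati (d : ℕ) (c ε : ℝ) (m : ℕ) {r : ℝ} (hr : r ≠ 0) :
    logPsiUDeriv2 (-(c / 2) - (d : ℝ) / 2) ε m r
      + logPsiUDeriv (-(c / 2) - (d : ℝ) / 2) ε m r ^ 2
      + ((d : ℝ) - 1) / r * logPsiUDeriv (-(c / 2) - (d : ℝ) / 2) ε m r = Wu d c ε m r := by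
  rw [Wu_eq_invLogProd, logPsiUDeriv, logPsiUDeriv2]
  field_simp
  ring

lemma psiU_eq_exp_logPsiU {d : ℕ} {c ε : ℝ} {m : ℕ} {x : EuclideanSpace ℝ (Fin d)}
    (hx : iterExp m < ‖x‖) :
    psiU d c ε m x = exp (logPsiU (-(c / 2) - (d : ℝ) / 2) ε m ‖x‖) := by
  have hx0 : 0 < ‖x‖ := (iterExp_nonneg m).trans_lt hx
  have hpos : ∀ j ≤ m, 0 < iterLog j ‖x‖ := fun j hj => iterLog_pos hj hx
  have hexp : exp (logPsiU (-(c / 2) - (d : ℝ) / 2) ε m ‖x‖) = ‖x‖ ^ (-(c / 2) - (d : ℝ) / 2)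
      * (∏ j ∈ Icc 1 m, iterLog j ‖x‖ ^ (-(1 : ℝ) / 2)) * iterLog m ‖x‖ ^ (-(ε / 2)) := by
    rw [rpow_def_of_pos hx0, rpow_def_of_pos (hpos m le_rfl),
      prod_congr rfl fun j hj => rpow_def_of_pos (hpos j (mem_Icc.1 hj).2) _, ← exp_sum,
      ← exp_add, ← exp_add, logPsiU, ← sum_mul]
    congr 1
    simp only [iterLog]
    ring_nf
  rw [hexp, psiU]
  split_ifs with hm
  · subst hm
    rw [Icc_eq_empty_of_lt zero_lt_one, prod_empty, mul_one, iterLog, ← rpow_add hx0]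
    ring_nf
  · rfl

section Radial

variable {F : Type*} [NormedAddCommGroup F] [InnerProductSpace ℝ F]

lemma hasFDerivAt_norm {x : F} (hx : x ≠ 0) :
    HasFDerivAt (fun y : F => ‖y‖) (‖x‖⁻¹ • innerSL ℝ x) x := by
  have hsqrt := (hasDerivAt_sqrt (pow_ne_zero 2 (norm_ne_zero_iff.2 hx))).comp_hasFDerivAt x
    (hasStrictFDerivAt_norm_sq x).hasFDerivAt
  simp only [Function.comp_def, sqrt_sq (norm_nonneg _)] at hsqrt
  refine hsqrt.congr_fderiv ?_
  ext v
  simp only [one_div, mul_inv_rev, smul_apply, coe_innerSL_apply, nsmul_eq_mul, Nat.cast_ofNat,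
    smul_eq_mul]
  field_simp

lemma HasDerivAt.hasFDerivAt_comp_norm {g : ℝ → ℝ} {g' : ℝ} {x : F} (hg : HasDerivAt g g' ‖x‖)
    (hx : x ≠ 0) : HasFDerivAt (fun y : F => g ‖y‖) ((g' * ‖x‖⁻¹) • innerSL ℝ x) x :=
  (hg.comp_hasFDerivAt x (hasFDerivAt_norm hx)).congr_fderiv (smul_smul _ _ _)

end Radial

lemma lap_congr {d : ℕ} {f g : EuclideanSpace ℝ (Fin d) → ℝ} {x : EuclideanSpace ℝ (Fin d)}
    (h : f =ᶠ[𝓝 x] g) : lap f x = lap g x := by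
  refine sum_congr rfl fun i _ => ?_
  have hi : (fun y => fderiv ℝ f y (EuclideanSpace.single i 1))
      =ᶠ[𝓝 x] fun y => fderiv ℝ g y (EuclideanSpace.single i 1) :=
    (h.fderiv (𝕜 := ℝ)).mono fun y hy => by simp only [hy]
  rw [hi.fderiv_eq]

lemma lap_radial {d : ℕ} {g g' : ℝ → ℝ} {g'' : ℝ} {x : EuclideanSpace ℝ (Fin d)} (hx : x ≠ 0)
    (hg : ∀ᶠ s in 𝓝 ‖x‖, HasDerivAt g (g' s) s) (hg' : HasDerivAt g' g'' ‖x‖) :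
    lap (fun y => g ‖y‖) x = g'' + ((d : ℝ) - 1) / ‖x‖ * g' ‖x‖ := by
  have hr : ‖x‖ ≠ 0 := norm_ne_zero_iff.2 hx
  -- the partial derivatives are `k(|y|) y_i` with `k(s) = g'(s) / s`
  set k' := g'' * ‖x‖⁻¹ + g' ‖x‖ * -(‖x‖ ^ 2)⁻¹
  have hk : HasDerivAt (fun s => g' s * s⁻¹) k' ‖x‖ := hg'.mul (hasDerivAt_inv hr)
  have hpartial : ∀ i, (fun y => fderiv ℝ (fun y => g ‖y‖) y (EuclideanSpace.single i 1))
      =ᶠ[𝓝 x] fun y => g' ‖y‖ * ‖y‖⁻¹ * y i := by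
    intro i
    filter_upwards [continuous_norm.continuousAt.eventually hg,
      isOpen_ne.mem_nhds hx] with y hy hy0
    rw [(hy.hasFDerivAt_comp_norm hy0).fderiv]
    simp [EuclideanSpace.inner_single_right]
  have hsecond : ∀ i, fderiv ℝ (fun y => g' ‖y‖ * ‖y‖⁻¹ * y i) x (EuclideanSpace.single i 1)
      = k' * ‖x‖⁻¹ * x i ^ 2 + g' ‖x‖ * ‖x‖⁻¹ := by
    intro i
    have hF : HasFDerivAt (fun y : EuclideanSpace ℝ (Fin d) => g' ‖y‖ * ‖y‖⁻¹ * y i) _ x :=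
      (hk.hasFDerivAt_comp_norm hx).mul (EuclideanSpace.proj (𝕜 := ℝ) i).hasFDerivAt
    rw [hF.fderiv]
    simp only [add_apply, smul_apply, PiLp.proj_apply, PiLp.single_eq_same, smul_eq_mul, mul_one,
      coe_innerSL_apply, EuclideanSpace.inner_single_right, ringHom_apply, one_mul]
    ring
  have hsq : ∑ i, x i ^ 2 = ‖x‖ ^ 2 := by
    simp [EuclideanSpace.norm_sq_eq, sq_abs]
  rw [lap, sum_congr rfl fun i _ => by rw [(hpartial i).fderiv_eq, hsecond i]]
  rw [sum_add_distrib, ← mul_sum, hsq, sum_const, card_univ, Fintype.card_fin, nsmul_eq_mul]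
  simp only [k']
  field_simp
  ring

lemma lap_exp_radial {d : ℕ} {h h' : ℝ → ℝ} {h'' : ℝ} {x : EuclideanSpace ℝ (Fin d)}
    (hx : x ≠ 0) (hh : ∀ᶠ s in 𝓝 ‖x‖, HasDerivAt h (h' s) s) (hh' : HasDerivAt h' h'' ‖x‖) :
    lap (fun y => exp (h ‖y‖)) x
      = (h'' + h' ‖x‖ ^ 2 + ((d : ℝ) - 1) / ‖x‖ * h' ‖x‖) * exp (h ‖x‖) := by
  have hg : ∀ᶠ s in 𝓝 ‖x‖, HasDerivAt (fun s => exp (h s)) (h' s * exp (h s)) s := by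
    filter_upwards [hh] with s hs
    simpa [mul_comm] using hs.exp
  have hg' := hh'.mul (hh.self_of_nhds.exp)
  rw [lap_radial hx hg hg']
  ring

theorem psiU_zero_energy_general (d : ℕ) (c : ℝ) (ε : ℝ) (m : ℕ) :
    ContDiffOn ℝ (⊤ : ℕ∞) (psiU d c ε m) {x : EuclideanSpace ℝ (Fin d) | iterExp m < ‖x‖} ∧
    ∀ x : EuclideanSpace ℝ (Fin d), iterExp m < ‖x‖ →
      -lap (psiU d c ε m) x + Wu d c ε m ‖x‖ * psiU d c ε m x = 0 := by
  set h := logPsiU (-(c / 2) - (d : ℝ) / 2) ε m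
  have hlog_ne : ∀ r, iterExp m < r → ∀ j ≤ m, iterLog j r ≠ 0 := fun r hr j hj =>
    (iterLog_pos hj hr).ne'
  have hne : ∀ x : EuclideanSpace ℝ (Fin d), iterExp m < ‖x‖ → x ≠ 0 := fun x hx =>
    norm_pos_iff.1 ((iterExp_nonneg m).trans_lt hx)
  have hψ : Set.EqOn (psiU d c ε m) (fun y => exp (h ‖y‖)) {x | iterExp m < ‖x‖} :=
    fun y hy => psiU_eq_exp_logPsiU hy
  refine ⟨ContDiffOn.congr (fun y hy => ?_) hψ, fun x hx => ?_⟩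
  · exact (contDiff_exp.contDiffAt.comp y ((contDiffAt_logPsiU (hlog_ne _ hy)).comp y
      (contDiffAt_norm ℝ (hne y hy)))).contDiffWithinAt
  · have hloc : psiU d c ε m =ᶠ[𝓝 x] fun y => exp (h ‖y‖) :=
      hψ.eventuallyEq_of_mem ((isOpen_lt continuous_const continuous_norm).mem_nhds hx)
    have hderiv : ∀ᶠ s in 𝓝 ‖x‖, HasDerivAt h (logPsiUDeriv (-(c / 2) - (d : ℝ) / 2) ε m s) s :=
      (eventually_gt_nhds hx).mono fun s hs => hasDerivAt_logPsiU (hlog_ne s hs)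
    rw [lap_congr hloc, lap_exp_radial (hne x hx) hderiv (hasDerivAt_logPsiUDeriv (hlog_ne _ hx)),
      logPsiU_riccati d c ε m (norm_pos_iff.2 (hne x hx)).ne', hψ hx]
    ring

/-- `ψᵘ_{c,m}` is smooth on `{|x| > e_m}` and satisfies
`(-Δ + W^{c,m}) ψᵘ_{c,m} = 0` pointwise there. -/
theorem psiU_zero_energy (d : ℕ) (hd : 0 < d) (c : ℝ) (hc : 0 ≤ c) (ε : ℝ) (hε : 0 < ε)
    (m : ℕ) :
    ContDiffOn ℝ (⊤ : ℕ∞) (psiU d c ε m) {x : EuclideanSpace ℝ (Fin d) | iterExp m < ‖x‖} ∧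
    ∀ x : EuclideanSpace ℝ (Fin d), iterExp m < ‖x‖ →
      -lap (psiU d c ε m) x + Wu d c ε m ‖x‖ * psiU d c ε m x = 0 :=
  psiU_zero_energy_general d c ε m
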